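/- Let q : [0,∞) → ℝ be continuous and satisfy the Kamenev condition for some ε > 2 and t₀ > 0. Then there is no T > 0 and differentiable function w : [T,∞) → ℝ satisfying the Riccati differential inequality w'(t) + [w(t)]² + q(t) ≤ 0 for all t ≥ T. -/

import Mathlib

/-!
Multiplying the Riccati inequality by `(t - s)^ε` and completing the square gives
`d/ds [(t - s)^ε w(s)] ≤ ε²/4 (t - s)^(ε-2) - (t - s)^ε q(s)` on `[a, t]`, so integrating,
`∫ₐᵗ (t - s)^ε q ≤ (t - a)^ε w(a) + O((t - a)^(ε-1))`. With the trivial bound `t^ε ∫_{t₀}^a |q|`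
on the fixed initial piece, the Kamenev quotient stays bounded, contradicting the Kamenev condition.
-/

open Real MeasureTheory Filter

/-- The Caputo fractional derivative of order `α` of `h` at `t`:
`h^(α)(t) = (1/Γ(1−α)) ∫₀ᵗ h'(s) (t−s)^(−α) ds`. -/
noncomputable def caputoDeriv (α : ℝ) (h : ℝ → ℝ) (t : ℝ) : ℝ :=
  (1 / Real.Gamma (1 - α)) * ∫ s in (0:ℝ)..t, deriv h s / (t - s) ^ α

/-- Kamenev condition: `limsup_{t→+∞} t^(−ε) ∫_{t₀}^t (t−s)^ε q(s) ds = +∞`. -/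
def KamenevCondition (q : ℝ → ℝ) (ε t₀ : ℝ) : Prop :=
  ∀ M : ℝ, ∃ᶠ t in atTop, M < (1 / t ^ ε) * ∫ s in t₀..t, (t - s) ^ ε * q s

open Set intervalIntegral

lemma integral_sub_rpow {r : ℝ} (hr : -1 < r) (a t : ℝ) :
    ∫ s in a..t, (t - s) ^ r = (t - a) ^ (r + 1) / (r + 1) := by
  rw [integral_comp_sub_left (fun x => x ^ r), integral_rpow (Or.inl hr), sub_self,
    zero_rpow (by linarith), sub_zero]

lemma neg_mul_rpow_sub_one_sub_rpow_mul_sq_le {a : ℝ} (ha : 0 < a) (ε x : ℝ) :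
    -(ε * a ^ (ε - 1) * x) - a ^ ε * x ^ 2 ≤ ε ^ 2 / 4 * a ^ (ε - 2) := by
  have h₁ : a ^ (ε - 1) = a ^ (ε - 2) * a := by
    rw [← rpow_add_one ha.ne']; ring_nf
  have h₂ : a ^ ε = a ^ (ε - 2) * a * a := by
    rw [← rpow_add_one ha.ne', ← rpow_add_one ha.ne']; ring_nf
  rw [h₁, h₂]
  nlinarith [mul_nonneg (rpow_nonneg ha.le (ε - 2)) (sq_nonneg (a * x + ε / 2))]

theorem integral_rpow_mul_le_of_riccati {ε a t : ℝ} (hε : 2 ≤ ε) (hat : a ≤ t) {q w : ℝ → ℝ}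
    (hq : ContinuousOn q (Icc a t)) (hw : ∀ s ∈ Icc a t, DifferentiableAt ℝ w s)
    (hric : ∀ s ∈ Ioo a t, deriv w s + w s ^ 2 + q s ≤ 0) :
    ∫ s in a..t, (t - s) ^ ε * q s ≤
      (t - a) ^ ε * w a + ε ^ 2 / (4 * (ε - 1)) * (t - a) ^ (ε - 1) := by
  have hpow : ∀ p : ℝ, 0 ≤ p → Continuous fun s : ℝ => (t - s) ^ p := fun p hp =>
    (continuous_sub_left t).rpow_const fun _ => Or.inr hp
  have hint_q : IntervalIntegrable (fun s => (t - s) ^ ε * q s) volume a t :=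
    ((hpow ε (by linarith)).continuousOn.mul hq).intervalIntegrable_of_Icc hat
  have hint_pow : IntervalIntegrable (fun s => (t - s) ^ (ε - 2)) volume a t :=
    (hpow _ (by linarith)).intervalIntegrable _ _
  have hftc := sub_le_integral_of_hasDeriv_right_of_le hat
    (g := fun s => (t - s) ^ ε * w s)
    (g' := fun s => -1 * ε * (t - s) ^ (ε - 1) * w s + (t - s) ^ ε * deriv w s)
    (φ := fun s => ε ^ 2 / 4 * (t - s) ^ (ε - 2) - (t - s) ^ ε * q s)
    ((hpow ε (by linarith)).continuousOn.mul fun s hs => (hw s hs).continuousAt.continuousWithinAt)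
    (fun s hs => ((((hasDerivAt_id s).const_sub t).rpow_const (Or.inr (by linarith))).mul
      (hw s (Ioo_subset_Icc_self hs)).hasDerivAt).hasDerivWithinAt)
    ((intervalIntegrable_iff_integrableOn_Icc_of_le hat).1 ((hint_pow.const_mul _).sub hint_q))
    (fun s hs => by
      have hts : 0 < t - s := sub_pos.2 hs.2
      have := mul_le_mul_of_nonneg_left (hric s hs) (rpow_nonneg hts.le ε)
      nlinarith [neg_mul_rpow_sub_one_sub_rpow_mul_sq_le hts ε (w s)])
  rw [integral_sub (hint_pow.const_mul _) hint_q, intervalIntegral.integral_const_mul,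
    integral_sub_rpow (by linarith)] at hftc
  simp only [sub_self, zero_rpow (by linarith : ε ≠ 0), zero_mul] at hftc
  rw [show ε - 2 + 1 = ε - 1 by ring] at hftc
  have : ε ^ 2 / 4 * ((t - a) ^ (ε - 1) / (ε - 1)) = ε ^ 2 / (4 * (ε - 1)) * (t - a) ^ (ε - 1) := by
    field_simp
  linarith

lemma integral_rpow_mul_le_rpow_mul_integral_abs {ε t₀ a t : ℝ} (hε : 0 ≤ ε) (ht₀ : 0 ≤ t₀)
    (ht₀a : t₀ ≤ a) (hat : a ≤ t) {q : ℝ → ℝ} (hq : ContinuousOn q (Icc t₀ a)) :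
    ∫ s in t₀..a, (t - s) ^ ε * q s ≤ t ^ ε * ∫ s in t₀..a, |q s| := by
  rw [← intervalIntegral.integral_const_mul]
  refine integral_mono_on ht₀a ?_ ?_ fun s hs => ?_
  · exact (((continuous_sub_left t).rpow_const fun _ => Or.inr hε).continuousOn.mul hq)
      |>.intervalIntegrable_of_Icc ht₀a
  · exact (hq.abs.const_smul (t ^ ε)).intervalIntegrable_of_Icc ht₀a
  · calc (t - s) ^ ε * q s ≤ (t - s) ^ ε * |q s| :=
          mul_le_mul_of_nonneg_left (le_abs_self _) (rpow_nonneg (by linarith [hs.2]) _)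
      _ ≤ t ^ ε * |q s| :=
          mul_le_mul_of_nonneg_right
            (rpow_le_rpow (by linarith [hs.2]) (by linarith [hs.1]) hε) (abs_nonneg _)

theorem eventually_kamenev_quotient_le_of_riccati {ε t₀ T : ℝ} (hε : 2 ≤ ε) (ht₀ : 0 ≤ t₀)
    {q w : ℝ → ℝ} (hq : ContinuousOn q (Ici t₀)) (hw : ∀ t ≥ T, DifferentiableAt ℝ w t)
    (hric : ∀ t ≥ T, deriv w t + w t ^ 2 + q t ≤ 0) :
    ∃ M, ∀ᶠ t in atTop, 1 / t ^ ε * ∫ s in t₀..t, (t - s) ^ ε * q s ≤ M := by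
  set a := max T t₀
  have ha : 0 ≤ a := ht₀.trans (le_max_right _ _)
  set c := ε ^ 2 / (4 * (ε - 1))
  have hc : 0 ≤ c := div_nonneg (by positivity) (by linarith)
  refine ⟨(∫ s in t₀..a, |q s|) + |w a| + c, ?_⟩
  filter_upwards [eventually_ge_atTop (max a 1)] with t ht
  have hat : a ≤ t := (le_max_left _ _).trans ht
  have ht1 : 1 ≤ t := (le_max_right _ _).trans ht
  have htε : 0 < t ^ ε := rpow_pos_of_pos (by linarith) _
  have hqt : ContinuousOn q (Icc t₀ t) := hq.mono Icc_subset_Ici_self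
  have hcont : ContinuousOn (fun s => (t - s) ^ ε * q s) (Icc t₀ t) :=
    ((continuous_sub_left t).rpow_const fun _ => Or.inr (by linarith)).continuousOn.mul hqt
  have hhead := integral_rpow_mul_le_rpow_mul_integral_abs (ε := ε) (by linarith) ht₀
    (le_max_right _ _) hat (hqt.mono (Icc_subset_Icc_right hat))
  have htail := integral_rpow_mul_le_of_riccati hε hat
    (hqt.mono (Icc_subset_Icc_left (le_max_right _ _)))
    (fun s hs => hw s ((le_max_left _ _).trans hs.1))
    (fun s hs => hric s ((le_max_left _ _).trans hs.1.le))
  have hwa : (t - a) ^ ε * w a ≤ t ^ ε * |w a| :=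
    calc (t - a) ^ ε * w a ≤ (t - a) ^ ε * |w a| :=
          mul_le_mul_of_nonneg_left (le_abs_self _) (rpow_nonneg (by linarith) _)
      _ ≤ t ^ ε * |w a| :=
          mul_le_mul_of_nonneg_right (rpow_le_rpow (by linarith) (by linarith) (by linarith))
            (abs_nonneg _)
  have hrem : c * (t - a) ^ (ε - 1) ≤ c * t ^ ε := mul_le_mul_of_nonneg_left
    ((rpow_le_rpow (by linarith) (by linarith) (by linarith)).trans
      (rpow_le_rpow_of_exponent_le ht1 (by linarith))) hc
  rw [← integral_add_adjacent_intervals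
      ((hcont.mono (Icc_subset_Icc_right hat)).intervalIntegrable_of_Icc (le_max_right _ _))
      ((hcont.mono (Icc_subset_Icc_left (le_max_right _ _))).intervalIntegrable_of_Icc hat),
    one_div, inv_mul_le_iff₀ htε]
  linarith

theorem no_global_riccati_solution_under_kamenev
    (ε t₀ : ℝ) (hε : 2 < ε) (ht₀ : 0 < t₀)
    (q : ℝ → ℝ) (hq : ContinuousOn q (Set.Ici (0:ℝ)))
    (hK : KamenevCondition q ε t₀) :
    ¬ ∃ T : ℝ, 0 < T ∧ ∃ w : ℝ → ℝ,
        (∀ t ≥ T, DifferentiableAt ℝ w t) ∧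
        ∀ t ≥ T, deriv w t + (w t) ^ 2 + q t ≤ 0 := by
  rintro ⟨T, -, w, hw, hric⟩
  obtain ⟨M, hM⟩ := eventually_kamenev_quotient_le_of_riccati hε.le ht₀.le
    (hq.mono (Ici_subset_Ici.2 ht₀.le)) hw hric
  obtain ⟨t, hlt, hle⟩ := ((hK M).and_eventually hM).exists
  exact hlt.not_ge hle
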